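/- For a CW complex X and n ≥ 2, the sectional category of the natural map from the bidirectional product to the symmetric product is bounded above by that of the diagonal: secat(βP^n(X) → SP^n(X)) ≤ secat(Δ : X → SP^n(X)), where βP^n(X) → SP^n(X) is the map of quotients induced by the identity of X^n. -/

import Mathlib

open unitInterval

noncomputable section

/-- The point `j/(n-1)` of the unit interval, for `j : Fin n`.
These are the `n` evaluation points `0, 1/(n-1), …, (n-2)/(n-1), 1`. -/
def evalPt (n : ℕ) (j : Fin n) : unitInterval :=
  ⟨(j : ℝ) / ((n : ℝ) - 1), by
    have hn : 1 ≤ n := j.pos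
    rcases eq_or_lt_of_le hn with h | h
    · have hn1 : n = 1 := h.symm
      subst hn1
      simp [Fin.fin_one_eq_zero j]
    · have h1 : (0 : ℝ) < (n : ℝ) - 1 := by
        have : (1 : ℝ) < (n : ℝ) := by exact_mod_cast h
        linarith
      constructor
      · exact div_nonneg (Nat.cast_nonneg _) h1.le
      · rw [div_le_one h1]
        have hj : (j : ℕ) + 1 ≤ n := j.is_lt
        have : ((j : ℕ) : ℝ) + 1 ≤ (n : ℝ) := by exact_mod_cast hj
        linarith⟩

/-- Coordinate reversal (the involution `β`) on `n`-tuples: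
`β·(x_1,…,x_n) = (x_n,…,x_1)`. -/
def rtuple {X : Type*} {n : ℕ} (x : Fin n → X) : Fin n → X := fun j => x j.rev

/-- Path reversal (the involution `β`) on the free path space `C(I,X)`:
`(β·γ)(t) = γ(1-t)`. -/
def rpath {X : Type*} [TopologicalSpace X] (γ : C(unitInterval, X)) : C(unitInterval, X) :=
  γ.comp ⟨unitInterval.symm, unitInterval.continuous_symm⟩

/-- `X^n` can be covered by `k` open sets, on each of which there is a continuous
section of the evaluation map `e_n : C(I,X) → X^n`,
`γ ↦ (γ(0), γ(1/(n-1)), …, γ(1))`. -/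
def HasPlanners (X : Type*) [TopologicalSpace X] (n k : ℕ) : Prop :=
  ∃ U : Fin k → Set (Fin n → X),
    (∀ i, IsOpen (U i)) ∧ (⋃ i, U i) = Set.univ ∧
    (∀ i, ∃ s : C(U i, C(unitInterval, X)),
      ∀ x : U i, ∀ j : Fin n, s x (evalPt n j) = (x : Fin n → X) j)

/-- The `n`-th (ordinary, higher) topological complexity `TC_n(X)`, as a value in `ℕ∞`. -/
def TCn (X : Type*) [TopologicalSpace X] (n : ℕ) : ℕ∞ :=
  sInf {k : ℕ∞ | ∃ m : ℕ, (m : ℕ∞) = k ∧ HasPlanners X n m}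

/-- `X^n` can be covered by `k` β-invariant open sets, on each of which there is a
continuous β-equivariant section of the evaluation map `e_n : C(I,X) → X^n`
(a bidirectional motion planner). -/
def HasBidirPlanners (X : Type*) [TopologicalSpace X] (n k : ℕ) : Prop :=
  ∃ U : Fin k → Set (Fin n → X),
    (∀ i, IsOpen (U i)) ∧ (⋃ i, U i) = Set.univ ∧
    (∀ i, ∀ x ∈ U i, rtuple x ∈ U i) ∧
    (∀ i, ∃ s : C(U i, C(unitInterval, X)),
      (∀ x : U i, ∀ j : Fin n, s x (evalPt n j) = (x : Fin n → X) j) ∧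
      (∀ x : U i, ∀ hx : rtuple (x : Fin n → X) ∈ U i,
        s ⟨rtuple (x : Fin n → X), hx⟩ = rpath (s x)))

/-- The `n`-th bidirectional topological complexity `TC^β_n(X)`, as a value in `ℕ∞`. -/
def TCbeta (X : Type*) [TopologicalSpace X] (n : ℕ) : ℕ∞ :=
  sInf {k : ℕ∞ | ∃ m : ℕ, (m : ℕ∞) = k ∧ HasBidirPlanners X n m}

/-- The action of a permutation `sg ∈ Σ_n` on `n`-tuples (by permuting coordinates). -/
def permTuple {X : Type*} {n : ℕ} (sg : Equiv.Perm (Fin n)) (x : Fin n → X) : Fin n → X :=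
  fun j => x (sg j)

/-- `X^n` can be covered by `k` `Σ_n`-invariant open sets, on each of which there is a
continuous `Σ_n`-equivariant section of `E_n : X^{J_n} → X^n`,
`(α_1,…,α_n) ↦ (α_1(1),…,α_n(1))`, where `X^{J_n}` is the space of `n`-tuples of paths
with a common initial point. -/
def HasSymPlanners (X : Type*) [TopologicalSpace X] (n k : ℕ) : Prop :=
  ∃ U : Fin k → Set (Fin n → X),
    (∀ i, IsOpen (U i)) ∧ (⋃ i, U i) = Set.univ ∧
    (∀ i, ∀ sg : Equiv.Perm (Fin n), ∀ x ∈ U i, permTuple sg x ∈ U i) ∧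
    (∀ i, ∃ s : C(U i, Fin n → C(unitInterval, X)),
      (∀ x : U i, ∀ j j' : Fin n, s x j 0 = s x j' 0) ∧
      (∀ x : U i, ∀ j : Fin n, s x j 1 = (x : Fin n → X) j) ∧
      (∀ x : U i, ∀ sg : Equiv.Perm (Fin n),
        ∀ hx : permTuple sg (x : Fin n → X) ∈ U i,
        s ⟨permTuple sg (x : Fin n → X), hx⟩ = permTuple sg (s x)))

/-- The `n`-th symmetrized topological complexity `TC^Σ_n(X)`, as a value in `ℕ∞`. -/
def TCsym (X : Type*) [TopologicalSpace X] (n : ℕ) : ℕ∞ :=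
  sInf {k : ℕ∞ | ∃ m : ℕ, (m : ℕ∞) = k ∧ HasSymPlanners X n m}

/-- The unit sphere `S^m ⊂ ℝ^{m+1}`. -/
abbrev Sph (m : ℕ) : Type :=
  Metric.sphere (0 : EuclideanSpace ℝ (Fin (m + 1))) 1

end
noncomputable section

/-- The setoid on `X^n` identifying a tuple with its reversal (the `ℤ/2`-action
generated by `β`). -/
def bpSetoid (X : Type*) (n : ℕ) : Setoid (Fin n → X) where
  r x y := x = y ∨ x = rtuple y
  iseqv := by
    constructor
    · intro x; exact Or.inl rfl
    · intro x y h
      rcases h with h | h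
      · exact Or.inl h.symm
      · refine Or.inr ?_
        funext j
        simp [h, rtuple, Fin.rev_rev]
    · intro x y z h1 h2
      rcases h1 with h1 | h1 <;> rcases h2 with h2 | h2
      · exact Or.inl (h1.trans h2)
      · exact Or.inr (h1.trans h2)
      · subst h1 h2; exact Or.inr rfl
      · subst h1 h2
        refine Or.inl ?_
        funext j
        simp [rtuple, Fin.rev_rev]

/-- The `n`-th bidirectional product `βP^n(X) = X^n/β`. -/
def bP (X : Type*) [TopologicalSpace X] (n : ℕ) : Type _ := Quotient (bpSetoid X n)

instance (X : Type*) [TopologicalSpace X] (n : ℕ) : TopologicalSpace (bP X n) :=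
  instTopologicalSpaceQuotient

/-- The setoid on `X^n` identifying tuples in the same `Σ_n`-orbit. -/
def spSetoid (X : Type*) (n : ℕ) : Setoid (Fin n → X) where
  r x y := ∃ sg : Equiv.Perm (Fin n), x = permTuple sg y
  iseqv := by
    constructor
    · intro x; exact ⟨1, rfl⟩
    · rintro x y ⟨sg, h⟩
      refine ⟨sg⁻¹, ?_⟩
      funext j
      simp [h, permTuple]
    · rintro x y z ⟨sg, h1⟩ ⟨tu, h2⟩
      refine ⟨sg.trans tu, ?_⟩
      funext j
      simp [h1, h2, permTuple]

/-- The `n`-th symmetric product `SP^n(X) = X^n/Σ_n`. -/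
def SP (X : Type*) [TopologicalSpace X] (n : ℕ) : Type _ := Quotient (spSetoid X n)

instance (X : Type*) [TopologicalSpace X] (n : ℕ) : TopologicalSpace (SP X n) :=
  instTopologicalSpaceQuotient

/-- The diagonal inclusion `Δ : X → SP^n(X)`. -/
def diagSP (X : Type*) [TopologicalSpace X] (n : ℕ) : C(X, SP X n) :=
  ⟨fun x => Quotient.mk (spSetoid X n) (fun _ => x),
    Continuous.comp continuous_quotient_mk' (continuous_pi fun _ => continuous_id)⟩

/-- The diagonal inclusion `Δ : X → βP^n(X)`. -/
def diagBP (X : Type*) [TopologicalSpace X] (n : ℕ) : C(X, bP X n) :=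
  ⟨fun x => Quotient.mk (bpSetoid X n) (fun _ => x),
    Continuous.comp continuous_quotient_mk' (continuous_pi fun _ => continuous_id)⟩

/-- The natural map `βP^n(X) → SP^n(X)` induced by the identity of `X^n`. -/
def bpToSp (X : Type*) [TopologicalSpace X] (n : ℕ) : C(bP X n, SP X n) :=
  ⟨Quotient.map' id (fun x y h => by
      rcases h with h | h
      · exact ⟨1, h⟩
      · exact ⟨Fin.revPerm, h⟩),
    Continuous.quotient_map' continuous_id _⟩

/-- The sectional category `secat(f)` of a map `f : A → B`: the smallest `k` such that
`B` is covered by `k` open sets, on each of which there is a continuous map `s` to `A`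
with `f ∘ s` homotopic to the inclusion. -/
def secat {A B : Type*} [TopologicalSpace A] [TopologicalSpace B] (f : C(A, B)) : ℕ∞ :=
  sInf {k : ℕ∞ | ∃ m : ℕ, (m : ℕ∞) = k ∧
    ∃ U : Fin m → Set B,
      (∀ i, IsOpen (U i)) ∧ (⋃ i, U i) = Set.univ ∧
      (∀ i, ∃ s : C(U i, A),
        (f.comp s).Homotopic ⟨Subtype.val, continuous_subtype_val⟩)}

end

universe u

namespace RelativeCWComplex

open CategoryTheory

/-- The `n`-dimensional sphere in `ℝ^{n+1}` (as in Mathlib of December 2024). -/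
def sphere (n : ℤ) : TopCat.{u} :=
  TopCat.of (ULift (Metric.sphere (0 : EuclideanSpace ℝ (Fin (Int.toNat (n + 1)))) 1))

/-- The `n`-dimensional closed disk in `ℝ^n`. -/
def disk (n : ℤ) : TopCat.{u} :=
  TopCat.of (ULift (Metric.closedBall (0 : EuclideanSpace ℝ (Fin (Int.toNat n))) 1))

/-- The inclusion map from the `n`-sphere to the `(n+1)`-disk. -/
def sphereInclusion (n : ℤ) : sphere.{u} n ⟶ disk.{u} (n + 1) :=
  TopCat.ofHom ⟨fun p => ULift.up ⟨p.down.1, le_of_eq p.down.2⟩,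
    continuous_uliftUp.comp
      ((continuous_subtype_val.comp continuous_uliftDown).subtype_mk _)⟩

/-- A type witnessing that `X'` is obtained from `X` by attaching generalized cells. -/
structure AttachGeneralizedCells {S D : TopCat.{u}} (f : S ⟶ D) (X X' : TopCat.{u}) where
  cells : Type u
  attachMaps : cells → (S ⟶ X)
  iso_pushout : X' ≅ Limits.pushout (Limits.Sigma.desc attachMaps)
    (Limits.Sigma.map fun _ : cells => f)

/-- A type witnessing that `X'` is obtained from `X` by attaching `(n + 1)`-disks. -/
def AttachCells (n : ℤ) := AttachGeneralizedCells (sphereInclusion.{u} n)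

end RelativeCWComplex

/-- A relative CW-complex (the December 2024 Mathlib notion). -/
structure RelativeCWComplex where
  sk : ℕ → TopCat.{u}
  attachCells (n : ℕ) : RelativeCWComplex.AttachCells ((n : ℤ) - 1) (sk n) (sk (n + 1))

/-- A CW-complex is a relative CW-complex whose `sk 0` is empty. -/
structure CWComplex extends RelativeCWComplex.{u} where
  isEmpty_sk_zero : IsEmpty (sk 0)

namespace RelativeCWComplex

open CategoryTheory

noncomputable section

/-- The inclusion `X ⟶ X'` when `X'` is obtained from `X` by attaching cells. -/
def AttachGeneralizedCells.inclusion {S D : TopCat.{u}} {f : S ⟶ D} {X X' : TopCat.{u}}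
    (att : AttachGeneralizedCells f X X') : X ⟶ X' :=
  Limits.pushout.inl _ _ ≫ att.iso_pushout.inv

/-- The inclusion of `sk n` into `sk (n + 1)`. -/
def skInclusion (X : RelativeCWComplex.{u}) (n : ℕ) : X.sk n ⟶ X.sk (n + 1) :=
  AttachGeneralizedCells.inclusion (X.attachCells n)

/-- The topological space of a relative CW-complex: the colimit of its skeleta. -/
def toTopCat (X : RelativeCWComplex.{u}) : TopCat.{u} :=
  Limits.colimit (Functor.ofSequence X.skInclusion)

end

end RelativeCWComplex

theorem secat_le_secat_comp {A B C : Type*} [TopologicalSpace A] [TopologicalSpace B]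
    [TopologicalSpace C] (g : C(B, C)) (f : C(A, B)) : secat g ≤ secat (g.comp f) := by
  refine sInf_le_sInf ?_
  rintro k ⟨m, rfl, U, hopen, hcover, hsec⟩
  refine ⟨m, rfl, U, hopen, hcover, fun i => ?_⟩
  obtain ⟨s, hs⟩ := hsec i
  exact ⟨f.comp s, hs⟩

theorem bpToSp_comp_diagBP (X : Type*) [TopologicalSpace X] (n : ℕ) :
    (bpToSp X n).comp (diagBP X n) = diagSP X n :=
  rfl

theorem secat_bpToSp_le_secat_diag_general (X : Type u) [TopologicalSpace X] (n : ℕ) :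
    secat (bpToSp X n) ≤ secat (diagSP X n) :=
  bpToSp_comp_diagBP X n ▸ secat_le_secat_comp _ _

/-- For a CW complex `X` and `n ≥ 2`,
`secat(βP^n(X) → SP^n(X)) ≤ secat(Δ : X → SP^n(X))`, where the first map is
induced by the identity of `X^n`. -/
theorem secat_bpToSp_le_secat_diag (X : Type u) [TopologicalSpace X]
    (hX : ∃ C : CWComplex.{u}, Nonempty (X ≃ₜ C.toRelativeCWComplex.toTopCat))
    (n : ℕ) (hn : 2 ≤ n) :
    secat (bpToSp X n) ≤ secat (diagSP X n) :=
  secat_bpToSp_le_secat_diag_general X n
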